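/- For an ε-NA coalgebra α : X → P(Σ_ε × X + 1) regarded as a P(Σ* × Id + Σ*)-coalgebra α̲, the least fixed point trace tr_{α̲} = ⋁_n ⊥ · α̲ⁿ (Kleisli composition in the ε-NA monad) maps each state x to its classical accepted language: w ∈ tr_{α̲}(x) iff either w = ε and ✓ ∈ α(x), or w = a₁…a_n and there is a path from x using ε-steps interleaved with steps a₁,…,a_n ending in a state x' with ✓ ∈ α(x'). -/

import Mathlib

/-!
STATEMENT 18: For an ε-NA coalgebra `α : X → P(Σ_ε × X + 1)` regarded as a
`P(Σ* × Id + Σ*)`-coalgebra `α̲`, the least fixed point trace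
`tr_{α̲} = ⋁_n ⊥ · α̲ⁿ` (Kleisli composition in the ε-NA monad) maps each state `x`
to its classical accepted language.  Here `Σ_ε = Σ + {ε}` is encoded as `Option A`
(`none` = `ε`), `Σ* = List A`, and `1 = Unit`.
-/

/-- Kleisli composition in the ε-NA monad `P(Σ* × Id + Σ*)`:
`(g·f)(x) = {(s₁s₂,z) | (s₁,y) ∈ f x, (s₂,z) ∈ g y} ∪ {s₁s₂ | (s₁,y) ∈ f x, s₂ ∈ g y}
∪ {s₁ | s₁ ∈ f x}`. -/
def enaComp {A X Y Z : Type*} (g : Y → Set ((List A × Z) ⊕ List A))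
    (f : X → Set ((List A × Y) ⊕ List A)) (x : X) : Set ((List A × Z) ⊕ List A) :=
  {r | (∃ (s₁ s₂ : List A) (y : Y) (z : Z),
          Sum.inl (s₁, y) ∈ f x ∧ Sum.inl (s₂, z) ∈ g y ∧ r = Sum.inl (s₁ ++ s₂, z)) ∨
       (∃ (s₁ s₂ : List A) (y : Y),
          Sum.inl (s₁, y) ∈ f x ∧ Sum.inr s₂ ∈ g y ∧ r = Sum.inr (s₁ ++ s₂)) ∨
       (∃ s₁ : List A, Sum.inr s₁ ∈ f x ∧ r = Sum.inr s₁)}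

/-- Kleisli powers of an endomorphism in the ε-NA monad; `α̲⁰` is the unit `x ↦ {(ε,x)}`. -/
def enaPow {A X : Type*} (α : X → Set ((List A × X) ⊕ List A)) :
    ℕ → (X → Set ((List A × X) ⊕ List A))
  | 0 => fun x => {Sum.inl ([], x)}
  | n + 1 => enaComp (enaPow α n) α

/-- The coalgebra `α̲ : X → P(Σ* × X + Σ*)` induced by an ε-NA `α : X → P(Σ_ε × X + 1)`:
visible steps become one-letter words, ε-steps become the empty word, and acceptance `✓`
becomes the empty word in the `Σ*` summand. -/
def enaUnderline {A X : Type*} (α : X → Set ((Option A × X) ⊕ Unit)) (x : X) :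
    Set ((List A × X) ⊕ List A) :=
  {r | (∃ (a : A) (y : X), Sum.inl (some a, y) ∈ α x ∧ r = Sum.inl ([a], y)) ∨
       (∃ y : X, Sum.inl (none, y) ∈ α x ∧ r = Sum.inl ([], y)) ∨
       (Sum.inr () ∈ α x ∧ r = Sum.inr [])}

/-- The least-fixed-point trace `tr_{α̲} = ⋁_n ⊥ · α̲ⁿ`:  composing `α̲ⁿ` with
`⊥ : X ⊸ 0` keeps exactly the `Σ*`-summand of `α̲ⁿ x`. -/
def enaTrace {A X : Type*} (α : X → Set ((Option A × X) ⊕ Unit)) (x : X) : Set (List A) :=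
  ⋃ n : ℕ, {s | Sum.inr s ∈ enaPow (enaUnderline α) n x}

/-- The classical accepted language of an ε-NA: `x` accepts `[]` if `✓ ∈ α x`, accepts `w`
via an ε-step keeping `w`, and accepts `a :: w` via an `a`-step to a state accepting `w`;
this is exactly "ε-steps interleaved with the letters of `w`, ending in a final state". -/
inductive ENAAccepts {A X : Type*} (α : X → Set ((Option A × X) ⊕ Unit)) :
    X → List A → Prop
  | final {x : X} : Sum.inr () ∈ α x → ENAAccepts α x []
  | eps {x y : X} {w : List A} : Sum.inl (none, y) ∈ α x →
      ENAAccepts α y w → ENAAccepts α x w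
  | step {x y : X} {a : A} {w : List A} : Sum.inl (some a, y) ∈ α x →
      ENAAccepts α y w → ENAAccepts α x (a :: w)

section

variable {A X Y Z : Type*}

theorem inr_mem_enaComp_iff (g : Y → Set ((List A × Z) ⊕ List A))
    (f : X → Set ((List A × Y) ⊕ List A)) (x : X) (s : List A) :
    Sum.inr s ∈ enaComp g f x ↔
      (∃ s₁ s₂ y, Sum.inl (s₁, y) ∈ f x ∧ Sum.inr s₂ ∈ g y ∧ s = s₁ ++ s₂) ∨ Sum.inr s ∈ f x := by
  simp [enaComp, eq_comm]

theorem inl_mem_enaUnderline_iff (α : X → Set ((Option A × X) ⊕ Unit)) (x y : X)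
    (s : List A) :
    Sum.inl (s, y) ∈ enaUnderline α x ↔
      (∃ a, s = [a] ∧ Sum.inl (some a, y) ∈ α x) ∨ (s = [] ∧ Sum.inl (none, y) ∈ α x) := by
  simp only [enaUnderline, Set.mem_ofPred_eq, Sum.inl.injEq, Prod.mk.injEq, reduceCtorEq,
    and_false, or_false]
  constructor
  · rintro (⟨a, y', h, rfl, rfl⟩ | ⟨y', h, rfl, rfl⟩)
    exacts [Or.inl ⟨a, rfl, h⟩, Or.inr ⟨rfl, h⟩]
  · rintro (⟨a, rfl, h⟩ | ⟨rfl, h⟩)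
    exacts [Or.inl ⟨a, y, h, rfl, rfl⟩, Or.inr ⟨y, h, rfl, rfl⟩]

theorem inr_mem_enaUnderline_iff (α : X → Set ((Option A × X) ⊕ Unit)) (x : X)
    (s : List A) :
    Sum.inr s ∈ enaUnderline α x ↔ s = [] ∧ Sum.inr () ∈ α x := by
  simp [enaUnderline, and_comm, eq_comm]

/-- Unfolding `α̲ⁿ⁺¹ = α̲ⁿ · α̲` once: the `Σ*`-part obeys exactly the three rules of
`ENAAccepts`. -/
theorem inr_mem_enaPow_succ_iff (α : X → Set ((Option A × X) ⊕ Unit)) (n : ℕ) (x : X)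
    (w : List A) :
    Sum.inr w ∈ enaPow (enaUnderline α) (n + 1) x ↔
      (∃ a y w', w = a :: w' ∧ Sum.inl (some a, y) ∈ α x ∧
          Sum.inr w' ∈ enaPow (enaUnderline α) n y) ∨
        (∃ y, Sum.inl (none, y) ∈ α x ∧ Sum.inr w ∈ enaPow (enaUnderline α) n y) ∨
        (w = [] ∧ Sum.inr () ∈ α x) := by
  simp only [enaPow, inr_mem_enaComp_iff, inl_mem_enaUnderline_iff, inr_mem_enaUnderline_iff]
  constructor
  · rintro (⟨_, w', y, ⟨a, rfl, ha⟩ | ⟨rfl, ha⟩, hw', rfl⟩ | hw)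
    exacts [Or.inl ⟨a, y, w', rfl, ha, hw'⟩, Or.inr (Or.inl ⟨y, ha, hw'⟩), Or.inr (Or.inr hw)]
  · rintro (⟨a, y, w', rfl, ha, hw'⟩ | ⟨y, ha, hw⟩ | hw)
    exacts [Or.inl ⟨[a], w', y, Or.inl ⟨a, rfl, ha⟩, hw', rfl⟩,
      Or.inl ⟨[], w, y, Or.inr ⟨rfl, ha⟩, hw, rfl⟩, Or.inr hw]

theorem ENAAccepts.of_inr_mem_enaPow (α : X → Set ((Option A × X) ⊕ Unit)) :
    ∀ (n : ℕ) {x : X} {w : List A},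
      Sum.inr w ∈ enaPow (enaUnderline α) n x → ENAAccepts α x w
  | 0, _, _, h => by simp [enaPow] at h
  | n + 1, _, _, h => by
    rcases (inr_mem_enaPow_succ_iff α n _ _).1 h with
      ⟨a, y, w', rfl, ha, hw'⟩ | ⟨y, ha, hw⟩ | ⟨rfl, hf⟩
    · exact .step ha (of_inr_mem_enaPow α n hw')
    · exact .eps ha (of_inr_mem_enaPow α n hw)
    · exact .final hf

theorem ENAAccepts.exists_inr_mem_enaPow {α : X → Set ((Option A × X) ⊕ Unit)} {x : X}
    {w : List A} (h : ENAAccepts α x w) :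
    ∃ n, Sum.inr w ∈ enaPow (enaUnderline α) n x := by
  induction h with
  | final hf => exact ⟨1, (inr_mem_enaPow_succ_iff α 0 _ _).2 (Or.inr (Or.inr ⟨rfl, hf⟩))⟩
  | eps ha _ ih =>
    obtain ⟨n, hn⟩ := ih
    exact ⟨n + 1, (inr_mem_enaPow_succ_iff α n _ _).2 (Or.inr (Or.inl ⟨_, ha, hn⟩))⟩
  | step ha _ ih =>
    obtain ⟨n, hn⟩ := ih
    exact ⟨n + 1, (inr_mem_enaPow_succ_iff α n _ _).2 (Or.inl ⟨_, _, _, rfl, ha, hn⟩)⟩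

end

theorem ena_trace_is_accepted_language {A X : Type*}
    (α : X → Set ((Option A × X) ⊕ Unit)) (x : X) (w : List A) :
    w ∈ enaTrace α x ↔ ENAAccepts α x w := by
  simp only [enaTrace, Set.mem_iUnion]
  exact ⟨fun ⟨n, hn⟩ => .of_inr_mem_enaPow α n hn, ENAAccepts.exists_inr_mem_enaPow⟩
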